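/- Let I be a support-2 monomial ideal in K[x1,x2,x3,x4] whose underlying graph is the 4-cycle, with exactly one generator per edge, written x_i^{w_{i,j}} x_j^{w_{j,i}} for each edge {x_i,x_j}. If w_{1,2} < w_{1,4}, then the monomial x1^{w_{1,2}} x4^{w_{4,1}} lies in I^{(1)} = Q(⟨x1,x3⟩) ∩ Q(⟨x2,x4⟩) but not in I; hence I has an embedded associated prime. -/

import Mathlib

set_option synthInstance.maxHeartbeats 1000000
set_option maxHeartbeats 1000000

open MvPolynomial

section Defs

variable {K : Type*} [Field K] {σ : Type*}

/-- `I` is a monomial ideal. -/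
def IsMonomialIdeal (I : Ideal (MvPolynomial σ K)) : Prop :=
  ∃ A : Set (σ →₀ ℕ), I = Ideal.span ((fun a => (monomial a (1 : K) : MvPolynomial σ K)) '' A)

/-- Exponent vectors of the minimal monomial generators of `I`. -/
def minGens (I : Ideal (MvPolynomial σ K)) : Set (σ →₀ ℕ) :=
  {a | (monomial a (1 : K) : MvPolynomial σ K) ∈ I ∧
    ∀ b : σ →₀ ℕ, (monomial b (1 : K) : MvPolynomial σ K) ∈ I → b ≤ a → b = a}

/-- A support-2 monomial ideal: every minimal monomial generator is supported
on exactly two variables. -/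
def IsSupportTwo (I : Ideal (MvPolynomial σ K)) : Prop :=
  ∀ a ∈ minGens I, a.support.card = 2

variable [DecidableEq σ]

/-- Minimal monomial generators of `I` supported on `{i, j}`. -/
def supportedOn (I : Ideal (MvPolynomial σ K)) (i j : σ) : Set (σ →₀ ℕ) :=
  {a | a ∈ minGens I ∧ a.support = {i, j}}

/-- `ν_{i,j}`: the minimum exponent of `x_i` among the minimal generators of `I`
supported on `{i, j}`. -/
noncomputable def nuExp (I : Ideal (MvPolynomial σ K)) (i j : σ) : ℕ :=
  sInf ((fun a => a i) '' supportedOn I i j)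

/-- `μ_{i,j}`: the maximum exponent of `x_i` among the minimal generators of `I`
supported on `{i, j}`. -/
noncomputable def muExp (I : Ideal (MvPolynomial σ K)) (i j : σ) : ℕ :=
  sSup ((fun a => a i) '' supportedOn I i j)

/-- The underlying simple graph `G(I)` of a support-2 monomial ideal. -/
def underGraph (I : Ideal (MvPolynomial σ K)) : SimpleGraph σ where
  Adj i j := i ≠ j ∧ (supportedOn I i j).Nonempty
  symm := ⟨by
    rintro i j ⟨hij, a, hmin, hs⟩
    exact ⟨hij.symm, a, hmin, by rw [hs, Finset.pair_comm]⟩⟩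
  loopless := ⟨fun i h => h.1 rfl⟩

end Defs

section Symbolic

variable {R : Type*} [CommRing R]

/-- The component of `I` at a prime `P`, namely `I S_P ∩ S`. -/
noncomputable def localizedComponent (I P : Ideal R) (hP : P.IsPrime) : Ideal R :=
  letI := hP
  (I.map (algebraMap R (Localization.AtPrime P))).comap
    (algebraMap R (Localization.AtPrime P))

/-- The `s`-th symbolic power `I^{(s)} = ⋂_{P ∈ MinAss(I)} (I^s S_P ∩ S)`. -/
noncomputable def symbolicPower (I : Ideal R) (s : ℕ) : Ideal R :=
  ⨅ P : I.minimalPrimes, localizedComponent (I ^ s) P.1 P.2.1.1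

/-- A Simis ideal: `I^{(s)} = I^s` for all `s ≥ 1`. -/
def IsSimis (I : Ideal R) : Prop := ∀ s : ℕ, 1 ≤ s → symbolicPower I s = I ^ s

/-- `I` has no embedded associated primes. -/
def NoEmbeddedPrimes (I : Ideal R) : Prop :=
  ∀ P ∈ associatedPrimes R (R ⧸ I), P ∈ I.minimalPrimes

end Symbolic

section Decomp

variable {K : Type*} [Field K] {σ : Type*}

/-- An irreducible monomial ideal: generated by pure powers of variables. -/
def IsIrredMonomialIdeal (Q : Ideal (MvPolynomial σ K)) : Prop :=
  ∃ (t : Finset σ) (e : σ → ℕ), (∀ i ∈ t, 1 ≤ e i) ∧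
    Q = Ideal.span ((fun i => (X i : MvPolynomial σ K) ^ e i) '' t)

/-- `I` has a minimal (irredundant, distinct radicals) irreducible decomposition. -/
def HasMinimalIrredDecomp (I : Ideal (MvPolynomial σ K)) : Prop :=
  ∃ (r : ℕ) (Q : Fin r → Ideal (MvPolynomial σ K)),
    (∀ k, IsIrredMonomialIdeal (Q k)) ∧ I = ⨅ k, Q k ∧
    (∀ k, (⨅ l ∈ ({k}ᶜ : Set (Fin r)), Q l) ≠ I) ∧
    (∀ k l, k ≠ l → (Q k).radical ≠ (Q l).radical)

/-- The ideal obtained from `J` by the standard linear weighting `x_i ↦ x_i^{d_i}`. -/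
noncomputable def weightedIdeal (d : σ → ℕ) (J : Ideal (MvPolynomial σ K)) : Ideal (MvPolynomial σ K) :=
  Ideal.span {m | ∃ a ∈ minGens J, ∃ b : σ →₀ ℕ,
    (∀ i, b i = d i * a i) ∧ m = (monomial b (1 : K) : MvPolynomial σ K)}

/-- `I` has a standard linear weighting: there are `d_i ≥ 1` such that every
minimal generator supported on `{i,j}` is `x_i^{d_i} x_j^{d_j}`. -/
def HasStdWeighting (I : Ideal (MvPolynomial σ K)) : Prop :=
  ∃ d : σ → ℕ, (∀ i, 1 ≤ d i) ∧ ∀ a ∈ minGens I, ∀ i ∈ a.support, a i = d i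

variable (K) in
/-- The edge ideal of a simple graph. -/
noncomputable def edgeIdeal (G : SimpleGraph σ) : Ideal (MvPolynomial σ K) :=
  Ideal.span {m | ∃ i j, G.Adj i j ∧ m = (X i * X j : MvPolynomial σ K)}

end Decomp

section Graph

variable {σ : Type*}

/-- A vertex cover of a simple graph. -/
def IsVertexCover (G : SimpleGraph σ) (C : Set σ) : Prop :=
  ∀ ⦃i j⦄, G.Adj i j → i ∈ C ∨ j ∈ C

/-- A minimal vertex cover of a simple graph. -/
def IsMinimalVertexCover (G : SimpleGraph σ) (C : Set σ) : Prop :=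
  IsVertexCover G C ∧ ∀ D ⊆ C, IsVertexCover G D → D = C

end Graph

section CM

variable {K : Type*} [Field K] {σ : Type*}

/-- The depth of `S/I` with respect to the irrelevant maximal ideal
`⟨x_1, …, x_n⟩`: the supremum of lengths of regular sequences on `S/I`
consisting of elements of that ideal. -/
noncomputable def quotDepth (I : Ideal (MvPolynomial σ K)) : ℕ∞ :=
  sSup {n : ℕ∞ | ∃ rs : List (MvPolynomial σ K), (rs.length : ℕ∞) = n ∧
    (∀ r ∈ rs, r ∈ Ideal.span (Set.range (X : σ → MvPolynomial σ K))) ∧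
    RingTheory.Sequence.IsRegular (MvPolynomial σ K ⧸ I)
      (rs.map (Ideal.Quotient.mk I))}

/-- `S/I` is Cohen–Macaulay: depth equals Krull dimension. -/
def IsCohenMacaulayQuot (I : Ideal (MvPolynomial σ K)) : Prop :=
  (quotDepth I : WithBot ℕ∞) = ringKrullDim (MvPolynomial σ K ⧸ I)

/-- The height of a prime ideal, as the Krull dimension of the localization. -/
noncomputable def primeHeight' {R : Type*} [CommRing R] (P : Ideal R) (hP : P.IsPrime) :
    WithBot ℕ∞ :=
  letI := hP
  ringKrullDim (Localization.AtPrime P)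

/-- `I` is unmixed: all associated primes of `S/I` have the same height. -/
def IsUnmixed {R : Type*} [CommRing R] (I : Ideal R) : Prop :=
  ∀ P, ∀ hP : P ∈ associatedPrimes R (R ⧸ I), ∀ Q, ∀ hQ : Q ∈ associatedPrimes R (R ⧸ I),
    primeHeight' P hP.1 = primeHeight' Q hQ.1

end CM

/-!
Write `m = x₁^{w₁₂} x₄^{w₄₁}`. Both `x₂^{w₂₁} m` (a multiple of the generator on `{x₁, x₂}`) and
`x₁^{w₁₄ - w₁₂} m` (the generator on `{x₁, x₄}`) lie in `I`. A prime containing `I` contains a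
vertex cover of the 4-cycle, so the minimal primes of `I` are `⟨x₁, x₃⟩` and `⟨x₂, x₄⟩`, and neither
contains both `x₁` and `x₂`. Hence at every minimal prime one of the two multipliers is a unit,
which gives `m ∈ I^{(1)}`; and an associated prime of `S/I` containing `I : m` contains `x₁` and
`x₂`, so it is embedded. No generator divides `m`, so `m ∉ I` and such a prime exists.
-/

section SymbolicPowerOne

variable {R : Type*} [CommRing R]

lemma mem_localizedComponent_of_mul_mem {I P : Ideal R} (hP : P.IsPrime) {s m : R}
    (hs : s ∉ P) (hsm : s * m ∈ I) : m ∈ localizedComponent I P hP := by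
  have := hP
  have hunit : IsUnit (algebraMap R (Localization.AtPrime P) s) :=
    IsLocalization.map_units (M := P.primeCompl) _ ⟨s, hs⟩
  rw [localizedComponent, Ideal.mem_comap, ← Ideal.unit_mul_mem_iff_mem _ hunit, ← map_mul]
  exact Ideal.mem_map_of_mem _ hsm

variable {I : Ideal R} {s t m : R}

lemma mem_symbolicPower_one_of_mul_mem (hst : ∀ P ∈ I.minimalPrimes, s ∈ P → t ∉ P)
    (hs : s * m ∈ I) (ht : t * m ∈ I) : m ∈ symbolicPower I 1 := by
  rw [symbolicPower, pow_one, Ideal.mem_iInf]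
  rintro ⟨P, hP⟩
  by_cases hsP : s ∈ P
  · exact mem_localizedComponent_of_mul_mem _ (hst P hP hsP) ht
  · exact mem_localizedComponent_of_mul_mem _ hsP hs

lemma exists_mem_associatedPrimes_notMem_minimalPrimes [IsNoetherianRing R]
    (hst : ∀ P ∈ I.minimalPrimes, s ∈ P → t ∉ P) (hs : s * m ∈ I) (ht : t * m ∈ I)
    (hm : m ∉ I) : ∃ P ∈ associatedPrimes R (R ⧸ I), P ∉ I.minimalPrimes := by
  have hm0 : Ideal.Quotient.mk I m ≠ 0 := by rwa [Ne, Ideal.Quotient.eq_zero_iff_mem]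
  obtain ⟨P, hass, hcolon⟩ := exists_le_isAssociatedPrime_of_isNoetherianRing R _ hm0
  have hmul : ∀ r, r * m ∈ I → r ∈ P := fun r hr => hcolon <| by
    rwa [Submodule.mem_colon_singleton, Submodule.mem_bot, Algebra.smul_def,
      Ideal.Quotient.algebraMap_eq, ← map_mul, Ideal.Quotient.eq_zero_iff_mem]
  exact ⟨P, hass, fun hmin => hst P hmin (hmul s hs) (hmul t ht)⟩

end SymbolicPowerOne

namespace MvPolynomial

variable {σ R : Type*} [CommRing R] {s : Set σ}

lemma sub_aeval_indicator_compl_mem_span_X_image (p : MvPolynomial σ R) :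
    p - aeval (sᶜ.indicator X) p ∈ Ideal.span (X '' s : Set (MvPolynomial σ R)) := by
  induction p using MvPolynomial.induction_on with
  | C a => simp
  | add p q hp hq => simpa only [map_add, add_sub_add_comm] using add_mem hp hq
  | mul_X p i hp =>
    by_cases hi : i ∈ s
    · simpa [hi] using Ideal.mul_mem_left _ p (Ideal.subset_span (Set.mem_image_of_mem X hi))
    · simpa [hi, ← sub_mul] using Ideal.mul_mem_right (X i) _ hp

lemma span_X_image_eq_ker :
    Ideal.span (X '' s : Set (MvPolynomial σ R)) =
      RingHom.ker (aeval (R := R) (sᶜ.indicator (X : σ → MvPolynomial σ R))) := by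
  refine le_antisymm ?_ fun p hp => ?_
  · rw [Ideal.span_le]
    rintro _ ⟨i, hi, rfl⟩
    simp [hi]
  · have h := sub_aeval_indicator_compl_mem_span_X_image (s := s) p
    rwa [show aeval (sᶜ.indicator X) p = 0 from hp, sub_zero] at h

lemma isPrime_span_X_image [IsDomain R] :
    (Ideal.span (X '' s : Set (MvPolynomial σ R))).IsPrime := by
  rw [span_X_image_eq_ker]
  exact RingHom.ker_isPrime _

lemma X_notMem_span_X_image [Nontrivial R] {i : σ} (hi : i ∉ s) :
    (X i : MvPolynomial σ R) ∉ Ideal.span (X '' s) := by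
  rw [mem_ideal_span_X_image]
  simp only [support_X, Finset.mem_singleton, forall_eq, Finsupp.single_apply_ne_zero]
  rintro ⟨j, hj, rfl, -⟩
  exact hi hj

end MvPolynomial

section FourCycle

variable (K : Type*) [Field K] (w12 w21 w23 w32 w34 w43 w14 w41 : ℕ)

/-- The variables `x₁, x₂, x₃, x₄` are `X 0, X 1, X 2, X 3`. -/
noncomputable def fourCycleIdeal : Ideal (MvPolynomial (Fin 4) K) :=
  Ideal.span {X 0 ^ w12 * X 1 ^ w21, X 1 ^ w23 * X 2 ^ w32, X 2 ^ w34 * X 3 ^ w43,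
    X 0 ^ w14 * X 3 ^ w41}

lemma fourCycleIdeal_eq_span_monomial : fourCycleIdeal K w12 w21 w23 w32 w34 w43 w14 w41 =
    Ideal.span ((fun e => monomial e (1 : K)) ''
      {Finsupp.single 0 w12 + Finsupp.single 1 w21, Finsupp.single 1 w23 + Finsupp.single 2 w32,
        Finsupp.single 2 w34 + Finsupp.single 3 w43,
        Finsupp.single 0 w14 + Finsupp.single 3 w41}) := by
  simp only [fourCycleIdeal, Set.image_insert_eq, Set.image_singleton, X_pow_eq_monomial,
    monomial_mul, one_mul]

variable {K w12 w21 w23 w32 w34 w43 w14 w41}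

lemma monomial_notMem_fourCycleIdeal (h2 : 1 ≤ w21) (h3 : 1 ≤ w23) (h5 : 1 ≤ w34)
    (hlt : w12 < w14) : monomial (Finsupp.single 0 w12 + Finsupp.single 3 w41) (1 : K) ∉
      fourCycleIdeal K w12 w21 w23 w32 w34 w43 w14 w41 := by
  classical
  rw [fourCycleIdeal_eq_span_monomial, mem_ideal_span_monomial_image,
    support_monomial, if_neg one_ne_zero]
  simp only [Finset.mem_singleton, forall_eq, Set.mem_insert_iff, Set.mem_singleton_iff,
    exists_eq_or_imp, exists_eq_left, Finsupp.le_def]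
  rintro (h | h | h | h)
  · exact Nat.one_le_iff_ne_zero.mp h2 (by simpa using h 1)
  · exact Nat.one_le_iff_ne_zero.mp h3 (by simpa using h 1)
  · exact Nat.one_le_iff_ne_zero.mp h5 (by simpa using h 2)
  · exact hlt.not_ge (by simpa using h 0)

lemma fourCycleIdeal_le_span_X_zero_two (h1 : 1 ≤ w12) (h4 : 1 ≤ w32) (h5 : 1 ≤ w34)
    (h7 : 1 ≤ w14) :
    fourCycleIdeal K w12 w21 w23 w32 w34 w43 w14 w41 ≤ Ideal.span (X '' {0, 2}) := by
  have hX0 : X 0 ∈ Ideal.span (X '' {0, 2} : Set (MvPolynomial (Fin 4) K)) :=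
    Ideal.subset_span (Set.mem_image_of_mem X (by simp))
  have hX2 : X 2 ∈ Ideal.span (X '' {0, 2} : Set (MvPolynomial (Fin 4) K)) :=
    Ideal.subset_span (Set.mem_image_of_mem X (by simp))
  simp only [fourCycleIdeal, Ideal.span_le, Set.insert_subset_iff, Set.singleton_subset_iff,
    SetLike.mem_coe]
  exact ⟨Ideal.mul_mem_right _ _ (Ideal.pow_mem_of_mem _ hX0 _ h1),
    Ideal.mul_mem_left _ _ (Ideal.pow_mem_of_mem _ hX2 _ h4),
    Ideal.mul_mem_right _ _ (Ideal.pow_mem_of_mem _ hX2 _ h5),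
    Ideal.mul_mem_right _ _ (Ideal.pow_mem_of_mem _ hX0 _ h7)⟩

lemma fourCycleIdeal_le_span_X_one_three (h2 : 1 ≤ w21) (h3 : 1 ≤ w23) (h6 : 1 ≤ w43)
    (h8 : 1 ≤ w41) :
    fourCycleIdeal K w12 w21 w23 w32 w34 w43 w14 w41 ≤ Ideal.span (X '' {1, 3}) := by
  have hX1 : X 1 ∈ Ideal.span (X '' {1, 3} : Set (MvPolynomial (Fin 4) K)) :=
    Ideal.subset_span (Set.mem_image_of_mem X (by simp))
  have hX3 : X 3 ∈ Ideal.span (X '' {1, 3} : Set (MvPolynomial (Fin 4) K)) :=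
    Ideal.subset_span (Set.mem_image_of_mem X (by simp))
  simp only [fourCycleIdeal, Ideal.span_le, Set.insert_subset_iff, Set.singleton_subset_iff,
    SetLike.mem_coe]
  exact ⟨Ideal.mul_mem_left _ _ (Ideal.pow_mem_of_mem _ hX1 _ h2),
    Ideal.mul_mem_right _ _ (Ideal.pow_mem_of_mem _ hX1 _ h3),
    Ideal.mul_mem_left _ _ (Ideal.pow_mem_of_mem _ hX3 _ h6),
    Ideal.mul_mem_left _ _ (Ideal.pow_mem_of_mem _ hX3 _ h8)⟩

lemma span_X_zero_two_le_or_span_X_one_three_le {P : Ideal (MvPolynomial (Fin 4) K)}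
    (hP : P.IsPrime) (hIP : fourCycleIdeal K w12 w21 w23 w32 w34 w43 w14 w41 ≤ P) :
    Ideal.span (X '' {0, 2}) ≤ P ∨ Ideal.span (X '' {1, 3}) ≤ P := by
  simp only [fourCycleIdeal, Ideal.span_le, Set.image_insert_eq, Set.image_singleton,
    Set.insert_subset_iff, Set.singleton_subset_iff, SetLike.mem_coe] at hIP ⊢
  obtain ⟨g01, g12, g23, g03⟩ := hIP
  have edge {x y : MvPolynomial (Fin 4) K} {a b : ℕ} (h : x ^ a * y ^ b ∈ P) :
      x ∈ P ∨ y ∈ P :=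
    (hP.mem_or_mem h).imp (hP.mem_of_pow_mem _) (hP.mem_of_pow_mem _)
  have := edge g01
  have := edge g12
  have := edge g23
  have := edge g03
  tauto

lemma X_one_notMem_of_X_zero_mem_of_mem_minimalPrimes (h1 : 1 ≤ w12) (h2 : 1 ≤ w21)
    (h3 : 1 ≤ w23) (h4 : 1 ≤ w32) (h5 : 1 ≤ w34) (h6 : 1 ≤ w43) (h7 : 1 ≤ w14) (h8 : 1 ≤ w41)
    {P : Ideal (MvPolynomial (Fin 4) K)}
    (hP : P ∈ (fourCycleIdeal K w12 w21 w23 w32 w34 w43 w14 w41).minimalPrimes)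
    (hX0 : X 0 ∈ P) : X 1 ∉ P := by
  intro hX1
  rcases span_X_zero_two_le_or_span_X_one_three_le hP.1.1 hP.1.2 with hle | hle
  · have hPle :=
      hP.2 ⟨isPrime_span_X_image, fourCycleIdeal_le_span_X_zero_two h1 h4 h5 h7⟩ hle
    exact X_notMem_span_X_image (by decide) (hPle hX1)
  · have hPle :=
      hP.2 ⟨isPrime_span_X_image, fourCycleIdeal_le_span_X_one_three h2 h3 h6 h8⟩ hle
    exact X_notMem_span_X_image (by decide) (hPle hX0)

end FourCycle

theorem stmt18_general {K : Type*} [Field K]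
    (w12 w21 w23 w32 w34 w43 w14 w41 : ℕ)
    (h1 : 1 ≤ w12) (h2 : 1 ≤ w21) (h3 : 1 ≤ w23) (h4 : 1 ≤ w32)
    (h5 : 1 ≤ w34) (h6 : 1 ≤ w43) (h8 : 1 ≤ w41)
    (hlt : w12 < w14)
    (I : Ideal (MvPolynomial (Fin 4) K))
    (hI : I = Ideal.span {X 0 ^ w12 * X 1 ^ w21, X 1 ^ w23 * X 2 ^ w32,
      X 2 ^ w34 * X 3 ^ w43, X 0 ^ w14 * X 3 ^ w41}) :
    (monomial (Finsupp.single 0 w12 + Finsupp.single 3 w41) (1 : K) :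
        MvPolynomial (Fin 4) K) ∈ symbolicPower I 1 ∧
    (monomial (Finsupp.single 0 w12 + Finsupp.single 3 w41) (1 : K) :
        MvPolynomial (Fin 4) K) ∉ I ∧
    ∃ P ∈ associatedPrimes (MvPolynomial (Fin 4) K) (MvPolynomial (Fin 4) K ⧸ I),
      P ∉ I.minimalPrimes := by
  obtain rfl : I = fourCycleIdeal K w12 w21 w23 w32 w34 w43 w14 w41 := hI
  set I := fourCycleIdeal K w12 w21 w23 w32 w34 w43 w14 w41
  set m : MvPolynomial (Fin 4) K := monomial (Finsupp.single 0 w12 + Finsupp.single 3 w41) 1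
  have hm : m = X 0 ^ w12 * X 3 ^ w41 := by
    simp only [m, X_pow_eq_monomial, monomial_mul, one_mul]
  have hs : X 0 ^ (w14 - w12) * m ∈ I := by
    rw [hm, ← mul_assoc, ← pow_add, Nat.sub_add_cancel hlt.le]
    exact Ideal.subset_span (by simp)
  have ht : X 1 ^ w21 * m ∈ I := by
    rw [hm, mul_left_comm, ← mul_assoc]
    exact Ideal.mul_mem_right _ _ (Ideal.subset_span (by simp))
  have hst : ∀ P ∈ I.minimalPrimes, X 0 ^ (w14 - w12) ∈ P → X 1 ^ w21 ∉ P :=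
    fun P hP hsP htP => X_one_notMem_of_X_zero_mem_of_mem_minimalPrimes h1 h2 h3 h4 h5 h6
      (Nat.one_le_of_lt hlt) h8 hP (hP.1.1.mem_of_pow_mem _ hsP) (hP.1.1.mem_of_pow_mem _ htP)
  have hmI : m ∉ I := monomial_notMem_fourCycleIdeal h2 h3 h5 hlt
  exact ⟨mem_symbolicPower_one_of_mul_mem hst hs ht, hmI,
    exists_mem_associatedPrimes_notMem_minimalPrimes hst hs ht hmI⟩

theorem stmt18 {K : Type*} [Field K]
    (w12 w21 w23 w32 w34 w43 w14 w41 : ℕ)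
    (h1 : 1 ≤ w12) (h2 : 1 ≤ w21) (h3 : 1 ≤ w23) (h4 : 1 ≤ w32)
    (h5 : 1 ≤ w34) (h6 : 1 ≤ w43) (h7 : 1 ≤ w14) (h8 : 1 ≤ w41)
    (hlt : w12 < w14)
    (I : Ideal (MvPolynomial (Fin 4) K))
    (hI : I = Ideal.span {X 0 ^ w12 * X 1 ^ w21, X 1 ^ w23 * X 2 ^ w32,
      X 2 ^ w34 * X 3 ^ w43, X 0 ^ w14 * X 3 ^ w41}) :
    (monomial (Finsupp.single 0 w12 + Finsupp.single 3 w41) (1 : K) :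
        MvPolynomial (Fin 4) K) ∈ symbolicPower I 1 ∧
    (monomial (Finsupp.single 0 w12 + Finsupp.single 3 w41) (1 : K) :
        MvPolynomial (Fin 4) K) ∉ I ∧
    ∃ P ∈ associatedPrimes (MvPolynomial (Fin 4) K) (MvPolynomial (Fin 4) K ⧸ I),
      P ∉ I.minimalPrimes :=
  stmt18_general w12 w21 w23 w32 w34 w43 w14 w41 h1 h2 h3 h4 h5 h6 h8 hlt I hI
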